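/- Let L1 and L2 be regular languages over a finite alphabet Σ. Then the set of words u that admit at least two distinct factorizations with respect to L1 and L2 — i.e., there exist pairs (u1, u2) ≠ (v1, v2) with u = u1 ++ u2 = v1 ++ v2, u1, v1 ∈ L1 and u2, v2 ∈ L2 — is a regular language. -/

import Mathlib

/-!
Two distinct factorizations of `u` overlap: they are `(x, y ++ z)` and `(x ++ y, z)` with
`y ≠ []`, and `x ++ y ∈ L1` says that `y` lies in the left quotient `K := x⁻¹L1`. Grouping by `K`,
which ranges over the finitely many left quotients of `L1`, the language is
`⋃ K, (L1 ∩ {x | x⁻¹L1 = K}) · (L2 ∩ (K \ {[]}) · L2)`.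
Each closure property needed for this is proved through Myhill–Nerode: every left quotient of the
new language is a fixed function of finitely many left quotients of the old ones.
-/

namespace Language

variable {α : Type*} {L M : Language α}

theorem mem_sSup {S : Set (Language α)} {x : List α} : x ∈ sSup S ↔ ∃ l ∈ S, x ∈ l := Iff.rfl

theorem leftQuotient_mul (w : List α) :
    (L * M).leftQuotient w =
      L.leftQuotient w * M + sSup (M.leftQuotient '' {y | ∃ x ∈ L, x ++ y = w}) := by
  ext v
  simp only [mem_leftQuotient, mem_mul, mem_add, mem_sSup, Set.exists_mem_image,
    List.append_eq_append_iff]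
  constructor
  · rintro ⟨x, hx, y, hy, ⟨c, rfl, rfl⟩ | ⟨c, rfl, rfl⟩⟩
    · exact .inr ⟨c, ⟨x, hx, rfl⟩, hy⟩
    · exact .inl ⟨c, hx, y, hy, rfl⟩
  · rintro (⟨c, hc, y, hy, rfl⟩ | ⟨y, ⟨x, hx, rfl⟩, hy⟩)
    · exact ⟨_, hc, y, hy, .inr ⟨c, rfl, rfl⟩⟩
    · exact ⟨x, hx, _, hy, .inl ⟨y, rfl, rfl⟩⟩

theorem IsRegular.mul (hL : L.IsRegular) (hM : M.IsRegular) : (L * M).IsRegular := by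
  refine .of_finite_range_leftQuotient <|
    (hL.finite_range_leftQuotient.image2 (fun K S ↦ K * M + sSup S)
      hM.finite_range_leftQuotient.powerset).subset ?_
  rintro _ ⟨w, rfl⟩
  exact ⟨_, ⟨w, rfl⟩, _, Set.image_subset_range _ _, (leftQuotient_mul w).symm⟩

theorem IsRegular.iSup {ι : Type*} [Finite ι] {l : ι → Language α}
    (h : ∀ i, (l i).IsRegular) : (⨆ i, l i).IsRegular := by
  refine .of_finite_range_leftQuotient <|
    ((Set.Finite.pi fun i ↦ (h i).finite_range_leftQuotient).image fun f ↦ ⨆ i, f i).subset ?_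
  rintro _ ⟨w, rfl⟩
  refine ⟨fun i ↦ (l i).leftQuotient w, fun i _ ↦ ⟨w, rfl⟩, ?_⟩
  ext v
  simp only [mem_leftQuotient, mem_iSup]

theorem IsRegular.sub (hL : L.IsRegular) (hM : M.IsRegular) : (L - M).IsRegular :=
  hL.inf hM.compl

theorem isRegular_one : (1 : Language α).IsRegular := by
  refine .of_finite_range_leftQuotient <| (Set.toFinite {1, 0}).subset ?_
  rintro _ ⟨w, rfl⟩
  rcases w with _ | ⟨a, w⟩
  · exact .inl rfl
  · exact .inr <| by ext v; simp [mem_one, notMem_zero]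

theorem IsRegular.leftQuotient (h : L.IsRegular) (x : List α) : (L.leftQuotient x).IsRegular :=
  .of_finite_range_leftQuotient <| h.finite_range_leftQuotient.subset <| by
    rintro _ ⟨y, rfl⟩
    exact ⟨x ++ y, leftQuotient_append L x y⟩

theorem IsRegular.setOf_leftQuotient_eq (h : L.IsRegular) (K : Language α) :
    IsRegular ({x | L.leftQuotient x = K} : Language α) := by
  refine .of_finite_range_leftQuotient <|
    (h.finite_range_leftQuotient.image fun N ↦ ({y | N.leftQuotient y = K} : Language α)).subset ?_
  rintro _ ⟨x, rfl⟩
  refine ⟨L.leftQuotient x, ⟨x, rfl⟩, ?_⟩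
  ext y
  show (L.leftQuotient x).leftQuotient y = K ↔ L.leftQuotient (x ++ y) = K
  rw [leftQuotient_append]

theorem exists_ne_factorization_iff {L1 L2 : Language α} {u : List α} :
    (∃ p q : List α × List α, p ≠ q ∧ p.1 ++ p.2 = u ∧ q.1 ++ q.2 = u ∧
        p.1 ∈ L1 ∧ p.2 ∈ L2 ∧ q.1 ∈ L1 ∧ q.2 ∈ L2) ↔
      ∃ x y z, y ≠ [] ∧ x ++ y ++ z = u ∧ x ∈ L1 ∧ x ++ y ∈ L1 ∧ y ++ z ∈ L2 ∧ z ∈ L2 := by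
  constructor
  · rintro ⟨⟨x, w⟩, ⟨x', w'⟩, hne, rfl, hu, hx, hw, hx', hw'⟩
    dsimp only at *
    rcases List.append_eq_append_iff.mp hu.symm with ⟨y, rfl, rfl⟩ | ⟨y, rfl, rfl⟩
    · refine ⟨x, y, w', ?_, by simp, hx, hx', hw, hw'⟩
      rintro rfl
      simp at hne
    · refine ⟨x', y, w, ?_, by simp, hx', hx, hw', hw⟩
      rintro rfl
      simp at hne
  · rintro ⟨x, y, z, hy, rfl, hx, hxy, hyz, hz⟩
    exact ⟨(x, y ++ z), (x ++ y, z), by simpa using hy.symm, by simp, by simp, hx, hyz, hxy, hz⟩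

theorem setOf_exists_overlap_eq_iSup (L1 L2 : Language α) :
    ({u | ∃ x y z, y ≠ [] ∧ x ++ y ++ z = u ∧ x ∈ L1 ∧ x ++ y ∈ L1 ∧ y ++ z ∈ L2 ∧ z ∈ L2} :
        Language α) =
      ⨆ K : Set.range L1.leftQuotient,
        (L1 ⊓ {x | L1.leftQuotient x = K}) * (L2 ⊓ ((K : Language α) - 1) * L2) := by
  refine Language.ext fun u ↦ ?_
  simp only [mem_iSup, mem_mul, mem_inf, mem_sub, mem_one]
  constructor
  · rintro ⟨x, y, z, hy, rfl, hx, hxy, hyz, hz⟩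
    exact ⟨⟨_, x, rfl⟩, x, ⟨hx, rfl⟩, y ++ z, ⟨hyz, y, ⟨hxy, hy⟩, z, hz, rfl⟩, by simp⟩
  · rintro ⟨K, x, ⟨hx, hxK : L1.leftQuotient x = K⟩, _, ⟨hyz, y, ⟨hxy, hy⟩, z, hz, rfl⟩, rfl⟩
    rw [← hxK] at hxy
    exact ⟨x, y, z, hy, List.append_assoc x y z, hx, hxy, hyz, hz⟩

end Language

theorem ambiguouslyDecomposable_isRegular_general
    {α : Type} (L1 L2 : Language α)
    (h1 : L1.IsRegular) (h2 : L2.IsRegular) :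
    Language.IsRegular
      ({u | ∃ p q : List α × List α, p ≠ q ∧
          p.1 ++ p.2 = u ∧ q.1 ++ q.2 = u ∧
          p.1 ∈ L1 ∧ p.2 ∈ L2 ∧ q.1 ∈ L1 ∧ q.2 ∈ L2} : Language α) := by
  have : Finite (Set.range L1.leftQuotient) := h1.finite_range_leftQuotient.to_subtype
  have hK (K : Set.range L1.leftQuotient) : (K : Language α).IsRegular := by
    obtain ⟨_, x, rfl⟩ := K
    exact h1.leftQuotient x
  simp_rw [Language.exists_ne_factorization_iff]
  rw [Language.setOf_exists_overlap_eq_iSup]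
  exact .iSup fun K ↦ (h1.inf (h1.setOf_leftQuotient_eq K)).mul
    (h2.inf (((hK K).sub Language.isRegular_one).mul h2))

/-- The set of words admitting at least two distinct factorizations with
respect to `L1` and `L2` is a regular language. -/
theorem ambiguouslyDecomposable_isRegular
    {α : Type} [Fintype α] (L1 L2 : Language α)
    (h1 : L1.IsRegular) (h2 : L2.IsRegular) :
    Language.IsRegular
      ({u | ∃ p q : List α × List α, p ≠ q ∧
          p.1 ++ p.2 = u ∧ q.1 ++ q.2 = u ∧
          p.1 ∈ L1 ∧ p.2 ∈ L2 ∧ q.1 ∈ L1 ∧ q.2 ∈ L2} : Language α) :=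
  ambiguouslyDecomposable_isRegular_general L1 L2 h1 h2
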